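/- Let a > 0 and M > 0. There exists a constant C > 0 such that for all t > 0: ∫_{−∞}^0 t^{−1/2} e^{−(y+at)²/(Mt)} (1+|y|)^{−3/2} dy ≤ C (1+t)^{−3/2}. -/

import Mathlib

/-!
Write the Gaussian factor `exp (-(y + a t)² / (M t))` as the product of two copies of
`exp (-(y + a t)² / (2 M t))`. One copy times the weight `(1 + |y|)^(-3/2)` is bounded by
`C (1 + t)^(-3/2)` uniformly in `y ≤ 0`; the other copy, normalised by `t^(-1/2)`, has total
mass `√(2πM)` independently of `t`.
-/

open MeasureTheory Set Real

lemma exp_neg_add_sq_div_eq (c s y : ℝ) :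
    exp (-(y + c) ^ 2 / s) = exp (-s⁻¹ * (y + c) ^ 2) := by
  ring_nf

lemma integrable_exp_neg_add_sq_div {s : ℝ} (c : ℝ) (hs : 0 < s) :
    Integrable fun y : ℝ => exp (-(y + c) ^ 2 / s) := by
  simpa only [exp_neg_add_sq_div_eq] using
    (integrable_exp_neg_mul_sq (inv_pos.2 hs)).comp_add_right c

lemma integral_exp_neg_add_sq_div (c s : ℝ) :
    ∫ y : ℝ, exp (-(y + c) ^ 2 / s) = √(π * s) := by
  simp only [exp_neg_add_sq_div_eq]
  rw [integral_add_right_eq_self (fun y : ℝ => exp (-s⁻¹ * y ^ 2)) c, integral_gaussian,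
    div_inv_eq_mul]

lemma integral_rpow_neg_half_mul_exp_neg_add_sq_div {M t : ℝ} (c : ℝ) (hM : 0 ≤ M)
    (ht : 0 < t) :
    ∫ y : ℝ, t ^ (-(1/2 : ℝ)) * exp (-(y + c) ^ 2 / (M * t)) = √(π * M) := by
  rw [integral_const_mul, integral_exp_neg_add_sq_div, ← mul_assoc,
    sqrt_mul (by positivity), sqrt_eq_rpow t, mul_comm, mul_assoc, ← rpow_add ht]
  norm_num

lemma exp_neg_div_eq_mul_self (x M t : ℝ) :
    exp (-x / (M * t)) = exp (-x / (2 * M * t)) * exp (-x / (2 * M * t)) := by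
  rw [← exp_add]; ring_nf

section Decay

variable {δ c p t : ℝ}

lemma one_add_mul_rpow_neg_le (hδ : 0 < δ) (hδ₁ : δ ≤ 1) (hp : 0 ≤ p) (ht : 0 ≤ t) :
    (1 + δ * t) ^ (-p) ≤ δ ^ (-p) * (1 + t) ^ (-p) := by
  rw [← mul_rpow hδ.le (by linarith)]
  exact rpow_le_rpow_of_nonpos (by positivity) (by nlinarith) (neg_nonpos.2 hp)

lemma exp_neg_mul_le_rpow_neg (hc : 0 < c) (hp : 0 < p) (ht : 0 ≤ t) :
    exp (-(c * t)) ≤ (min 1 (c / p)) ^ (-p) * (1 + t) ^ (-p) := by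
  have hδ : 0 < min 1 (c / p) := lt_min one_pos (by positivity)
  calc exp (-(c * t)) = exp (c / p * t) ^ (-p) := by
        rw [← exp_mul]; field_simp
    _ ≤ (1 + min 1 (c / p) * t) ^ (-p) := by
        refine rpow_le_rpow_of_nonpos (by positivity) ?_ (by linarith)
        calc 1 + min 1 (c / p) * t ≤ c / p * t + 1 := by
              nlinarith [min_le_right 1 (c / p)]
          _ ≤ exp (c / p * t) := add_one_le_exp _
    _ ≤ _ := one_add_mul_rpow_neg_le hδ (min_le_left _ _) hp.le ht

end Decay

/-- Either `|y| ≤ a t / 2`, where the Gaussian is `≤ exp (-a² t / (4 M))`, or the weight is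
`≤ (1 + a t / 2)^(-p)`; both decay like `(1 + t)^(-p)`. -/
lemma exists_exp_neg_mul_one_add_abs_rpow_neg_le {a M p : ℝ} (ha : 0 < a) (hM : 0 < M)
    (hp : 0 < p) :
    ∃ C > 0, ∀ t > 0, ∀ y ≤ 0,
      exp (-(y + a * t) ^ 2 / (M * t)) * (1 + |y|) ^ (-p) ≤ C * (1 + t) ^ (-p) := by
  set c := a ^ 2 / (4 * M)
  set δ := min 1 (a / 2)
  have hδ : 0 < δ := lt_min one_pos (by positivity)
  refine ⟨(min 1 (c / p)) ^ (-p) + δ ^ (-p), by positivity, fun t ht y hy => ?_⟩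
  have hw : 0 < (1 + |y|) ^ (-p) := by positivity
  rcases le_or_gt (-y) (a * t / 2) with hnear | hfar
  · have hgauss : exp (-(y + a * t) ^ 2 / (M * t)) ≤ exp (-(c * t)) := by
      rw [exp_le_exp, div_le_iff₀ (by positivity)]
      have : c * t * (M * t) = (a * t / 2) ^ 2 := by simp only [c]; field_simp; ring
      nlinarith [mul_pos ha ht]
    have hw₁ : (1 + |y|) ^ (-p) ≤ 1 :=
      rpow_le_one_of_one_le_of_nonpos (by simp) (by linarith)
    calc exp (-(y + a * t) ^ 2 / (M * t)) * (1 + |y|) ^ (-p) ≤ exp (-(c * t)) * 1 :=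
          mul_le_mul hgauss hw₁ hw.le (exp_pos _).le
      _ ≤ (min 1 (c / p)) ^ (-p) * (1 + t) ^ (-p) := by
          simpa using exp_neg_mul_le_rpow_neg (by positivity) hp ht.le
      _ ≤ _ := by gcongr; exact le_add_of_nonneg_right (by positivity)
  · have hw₂ : (1 + |y|) ^ (-p) ≤ (1 + δ * t) ^ (-p) := by
      refine rpow_le_rpow_of_nonpos (by positivity) ?_ (by linarith)
      nlinarith [min_le_right 1 (a / 2), abs_of_nonpos hy]
    calc exp (-(y + a * t) ^ 2 / (M * t)) * (1 + |y|) ^ (-p) ≤ 1 * (1 + δ * t) ^ (-p) := by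
          refine mul_le_mul ?_ hw₂ hw.le zero_le_one
          exact exp_le_one_iff.2 (div_nonpos_of_nonpos_of_nonneg (by nlinarith) (by positivity))
      _ ≤ δ ^ (-p) * (1 + t) ^ (-p) := by
          simpa using one_add_mul_rpow_neg_le hδ (min_le_left _ _) hp.le ht.le
      _ ≤ _ := by gcongr; exact le_add_of_nonneg_left (by positivity)

theorem excited_time_derivative_estimate (a M : ℝ) (ha : 0 < a) (hM : 0 < M) :
    ∃ C > 0, ∀ t : ℝ, 0 < t →
      (∫ y in Set.Iic (0:ℝ),
          t ^ (-(1/2:ℝ)) * Real.exp (-(y + a*t)^2 / (M*t)) *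
            (1 + |y|) ^ (-(3/2:ℝ))) ≤
        C * (1 + t) ^ (-(3/2:ℝ)) := by
  obtain ⟨C, hC, hpoint⟩ :=
    exists_exp_neg_mul_one_add_abs_rpow_neg_le ha (by positivity : 0 < 2 * M)
      (by norm_num : (0 : ℝ) < 3 / 2)
  refine ⟨C * √(π * (2 * M)), by positivity, fun t ht => ?_⟩
  set K : ℝ → ℝ := fun y => t ^ (-(1/2 : ℝ)) * exp (-(y + a * t) ^ 2 / (2 * M * t))
  have hK : Integrable fun y => C * (1 + t) ^ (-(3/2 : ℝ)) * K y :=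
    ((integrable_exp_neg_add_sq_div (a * t) (by positivity)).const_mul _).const_mul _
  have hsplit : ∀ y ≤ (0 : ℝ), t ^ (-(1/2:ℝ)) * exp (-(y + a * t) ^ 2 / (M * t)) *
      (1 + |y|) ^ (-(3/2:ℝ)) ≤ C * (1 + t) ^ (-(3/2 : ℝ)) * K y := fun y hy => by
    rw [exp_neg_div_eq_mul_self]
    calc _ = K y * (exp (-(y + a * t) ^ 2 / (2 * M * t)) * (1 + |y|) ^ (-(3/2:ℝ))) := by ring
      _ ≤ K y * (C * (1 + t) ^ (-(3/2 : ℝ))) :=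
          mul_le_mul_of_nonneg_left (hpoint t ht y hy) (by positivity)
      _ = _ := mul_comm _ _
  calc _ ≤ ∫ y in Iic (0 : ℝ), C * (1 + t) ^ (-(3/2 : ℝ)) * K y :=
        integral_mono_of_nonneg (.of_forall fun y => by positivity) hK.integrableOn
          (ae_restrict_of_forall_mem measurableSet_Iic hsplit)
    _ ≤ ∫ y, C * (1 + t) ^ (-(3/2 : ℝ)) * K y :=
        setIntegral_le_integral hK (.of_forall fun y => by positivity)
    _ = C * √(π * (2 * M)) * (1 + t) ^ (-(3/2:ℝ)) := by
        rw [integral_const_mul, integral_rpow_neg_half_mul_exp_neg_add_sq_div _ (by positivity) ht]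
        ring
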